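/- Let n ≥ 1 and d ≥ 1 be integers, let x_1, …, x_n ∈ ℝ^d, and suppose the gradient-enhanced Gaussian kernel matrix K̃∇ built from x_1,…,x_n is positive semidefinite. Let κ_max > 1 and set η := (1 + u_G(n,d))/(κ_max − 1). Then (λ_max + η)/(λ_min + η) ≤ κ_max, where λ_max and λ_min are the largest and smallest eigenvalues of K̃∇; that is, the condition number of K̃∇ + ηI is at most κ_max. -/

import Mathlib

open scoped BigOperators

/-- The gradient-enhanced Gaussian kernel matrix (with unit hyperparameters) built
from points `x_1, …, x_n ∈ ℝ^d`, indexed by pairs `(p, a)` where `p = none` is the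
function-value block and `p = some j` the block of derivatives in coordinate `j`. -/
noncomputable def Kgrad {n d : ℕ} (x : Fin n → Fin d → ℝ) :
    Matrix (Option (Fin d) × Fin n) (Option (Fin d) × Fin n) ℝ :=
  fun pa qi =>
    let a := pa.2
    let i := qi.2
    let k : ℝ := Real.exp (-(∑ l, (x a l - x i l) ^ 2) / 2)
    match pa.1, qi.1 with
    | none, none => k
    | none, some j => (x a j - x i j) * k
    | some p, none => -(x a p - x i p) * k
    | some p, some j =>
        ((if p = j then (1 : ℝ) else 0) - (x a p - x i p) * (x a j - x i j)) * k

/-- Upper bound `u_G(n,d)`. -/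
noncomputable def uG (n d : ℕ) : ℝ :=
  ((n : ℝ) - 1) * ((1 + Real.sqrt (1 + 4 * (d : ℝ))) / 2) *
    Real.exp (-(1 + 2 * (d : ℝ) - Real.sqrt (1 + 4 * (d : ℝ))) / (4 * (d : ℝ)))

/-! Each `(d+1) × (d+1)` block of `K̃∇` at `(a, i)` is `exp (-|Δ|²/2)` times
`G(Δ) = [[1, Δᵀ], [-Δ, I - ΔΔᵀ]]` with `Δ = x_a - x_i`. The transpose of `G(Δ)` sends `(v₀, v')`
to `(s, v' + sΔ)` with `s = v₀ - ⟨v', Δ⟩`, and a `2 × 2` discriminant computation resting on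
`t³ ≤ (eᵗ - 1 - t)(eᵗ - 1 + t - t²)` bounds its squared norm by `e^{|Δ|²} (v₀² + |v'|²)`.
Hence every block of `K̃∇` is a contraction, its quadratic form is at most
`(∑ₐ |v_a|)² ≤ n |v|²`, and `λ_max ≤ n`. As `u_G(n, d) ≥ n - 1` we get `n ≤ (κ_max - 1) η`, and
with `λ_min ≥ 0` the condition number is at most `(n + η) / η ≤ κ_max`. -/

open Matrix

theorem taylor_four_le_exp {t : ℝ} (ht : 0 ≤ t) :
    1 + t + t ^ 2 / 2 + t ^ 3 / 6 + t ^ 4 / 24 ≤ Real.exp t := by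
  simpa [Finset.sum_range_succ, Nat.factorial] using Real.sum_le_exp_of_nonneg ht 5

theorem pow_three_le_mul_exp_sub {t : ℝ} (ht : 0 ≤ t) :
    t ^ 3 ≤ (Real.exp t - 1 - t) * (Real.exp t - 1 + t - t ^ 2) := by
  have hE := taylor_four_le_exp ht
  have h₁ : t ^ 2 / 2 + t ^ 3 / 6 ≤ Real.exp t - 1 - t := by nlinarith [pow_nonneg ht 4]
  have h₂ : 2 * t - t ^ 2 / 2 + t ^ 3 / 6 ≤ Real.exp t - 1 + t - t ^ 2 := by
    nlinarith [pow_nonneg ht 4]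
  have h₂' : 0 ≤ 2 * t - t ^ 2 / 2 + t ^ 3 / 6 := by
    nlinarith [mul_nonneg ht (sq_nonneg (t - 3 / 2))]
  calc t ^ 3 ≤ (t ^ 2 / 2 + t ^ 3 / 6) * (2 * t - t ^ 2 / 2 + t ^ 3 / 6) := by
        nlinarith [pow_nonneg ht 4, pow_nonneg ht 6]
    _ ≤ _ := mul_le_mul h₁ h₂ h₂' (by nlinarith)

theorem quadratic_form_nonneg_of_sq_le_mul {a b c X Y : ℝ} (ha : 0 ≤ a) (hc : 0 ≤ c)
    (hb : b ^ 2 ≤ a * c) :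
    0 ≤ a * X ^ 2 + 2 * b * X * Y + c * Y ^ 2 := by
  rcases ha.eq_or_lt with rfl | ha
  · obtain rfl : b = 0 := by nlinarith
    nlinarith
  · nlinarith [sq_nonneg (a * X + b * Y)]

theorem dotProduct_le_sqrt_mul_sqrt {ι : Type*} [Fintype ι] (v u : ι → ℝ) :
    v ⬝ᵥ u ≤ √(v ⬝ᵥ v) * √(u ⬝ᵥ u) := by
  simpa only [dotProduct, sq] using Real.sum_mul_le_sqrt_mul_sqrt Finset.univ v u

theorem sub_sq_mul_one_add_add_le_exp_mul {v₀ α p t : ℝ} (ht : 0 ≤ t) (hα : α ^ 2 ≤ t * p) :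
    (v₀ - α) ^ 2 * (1 + t) + 2 * (v₀ - α) * α + p ≤ Real.exp t * (v₀ ^ 2 + p) := by
  rcases ht.eq_or_lt with rfl | ht
  · obtain rfl : α = 0 := by nlinarith
    simp
  have hq₁ : 0 ≤ Real.exp t - 1 - t := by linarith [Real.add_one_le_exp t]
  have hq₂ : 0 ≤ Real.exp t - 1 + t - t ^ 2 := by
    nlinarith [taylor_four_le_exp ht.le, mul_nonneg ht.le (sq_nonneg (t - 3 / 2)),
      pow_nonneg ht.le 4]
  have hform := quadratic_form_nonneg_of_sq_le_mul (b := t ^ 2) (X := v₀) (Y := α)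
    (mul_nonneg ht.le hq₁) hq₂
    (by nlinarith [pow_three_le_mul_exp_sub ht.le])
  have hp : 0 ≤ (Real.exp t - 1) * (t * p - α ^ 2) :=
    mul_nonneg (by linarith [Real.add_one_le_exp t]) (by linarith)
  -- `t` times the gap is the quadratic form `hform` plus `hp`
  have : 0 ≤ t * (Real.exp t * (v₀ ^ 2 + p) - ((v₀ - α) ^ 2 * (1 + t) + 2 * (v₀ - α) * α + p)) := by
    nlinarith
  linarith [(mul_nonneg_iff_of_pos_left ht).mp this]

section

variable {ι : Type*} [Fintype ι] [DecidableEq ι]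

def gradBlock (Δ : ι → ℝ) : Matrix (Option ι) (Option ι) ℝ
  | none, none => 1
  | none, some j => Δ j
  | some p, none => -Δ p
  | some p, some j => (if p = j then 1 else 0) - Δ p * Δ j

theorem vecMul_gradBlock_none (Δ : ι → ℝ) (v : Option ι → ℝ) :
    (v ᵥ* gradBlock Δ) none = v none - (v ∘ some) ⬝ᵥ Δ := by
  simp [vecMul, dotProduct, Fintype.sum_option, gradBlock, sub_eq_add_neg]

theorem vecMul_gradBlock_some (Δ : ι → ℝ) (v : Option ι → ℝ) (j : ι) :
    (v ᵥ* gradBlock Δ) (some j) = v (some j) + (v none - (v ∘ some) ⬝ᵥ Δ) * Δ j := by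
  simp only [vecMul, dotProduct, Fintype.sum_option, gradBlock, mul_sub, mul_ite, mul_one, mul_zero,
    Finset.sum_sub_distrib, Finset.sum_ite_eq', Finset.mem_univ, if_true, sub_mul, Finset.sum_mul,
    Function.comp_apply, mul_assoc]
  ring

theorem vecMul_gradBlock_dotProduct_self (Δ : ι → ℝ) (v : Option ι → ℝ) :
    (v ᵥ* gradBlock Δ) ⬝ᵥ (v ᵥ* gradBlock Δ) =
      (v none - (v ∘ some) ⬝ᵥ Δ) ^ 2 * (1 + Δ ⬝ᵥ Δ)
        + 2 * (v none - (v ∘ some) ⬝ᵥ Δ) * ((v ∘ some) ⬝ᵥ Δ) + (v ∘ some) ⬝ᵥ (v ∘ some) := by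
  rw [dotProduct, Fintype.sum_option, vecMul_gradBlock_none]
  simp only [vecMul_gradBlock_some]
  generalize v none - (v ∘ some) ⬝ᵥ Δ = s
  have hexpand : ∀ j, (v (some j) + s * Δ j) * (v (some j) + s * Δ j) =
      v (some j) * v (some j) + 2 * s * (v (some j) * Δ j) + s ^ 2 * (Δ j * Δ j) := fun j => by ring
  simp only [hexpand, Finset.sum_add_distrib, ← Finset.mul_sum, dotProduct, Function.comp_apply]
  ring

theorem dotProduct_gradBlock_mulVec_le (Δ : ι → ℝ) (v u : Option ι → ℝ) :
    v ⬝ᵥ gradBlock Δ *ᵥ u ≤ Real.exp (Δ ⬝ᵥ Δ / 2) * (√(v ⬝ᵥ v) * √(u ⬝ᵥ u)) := by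
  have hCS : ((v ∘ some) ⬝ᵥ Δ) ^ 2 ≤ Δ ⬝ᵥ Δ * ((v ∘ some) ⬝ᵥ (v ∘ some)) := by
    simpa only [dotProduct, mul_comm (Δ _), ← sq] using
      Finset.sum_mul_sq_le_sq_mul_sq Finset.univ Δ (v ∘ some)
  have hnorm : (v ᵥ* gradBlock Δ) ⬝ᵥ (v ᵥ* gradBlock Δ) ≤ Real.exp (Δ ⬝ᵥ Δ) * (v ⬝ᵥ v) := by
    have hv : v ⬝ᵥ v = v none ^ 2 + (v ∘ some) ⬝ᵥ (v ∘ some) := by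
      simp [dotProduct, Fintype.sum_option, sq]
    rw [vecMul_gradBlock_dotProduct_self, hv]
    exact sub_sq_mul_one_add_add_le_exp_mul (by simpa using dotProduct_self_star_nonneg Δ) hCS
  calc v ⬝ᵥ gradBlock Δ *ᵥ u = (v ᵥ* gradBlock Δ) ⬝ᵥ u := dotProduct_mulVec _ _ _
    _ ≤ √((v ᵥ* gradBlock Δ) ⬝ᵥ (v ᵥ* gradBlock Δ)) * √(u ⬝ᵥ u) := dotProduct_le_sqrt_mul_sqrt _ _
    _ ≤ √(Real.exp (Δ ⬝ᵥ Δ) * (v ⬝ᵥ v)) * √(u ⬝ᵥ u) := by gcongr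
    _ = Real.exp (Δ ⬝ᵥ Δ / 2) * (√(v ⬝ᵥ v) * √(u ⬝ᵥ u)) := by
      rw [Real.sqrt_mul (Real.exp_pos _).le, Real.exp_half, mul_assoc]

end

theorem dotProduct_mulVec_le_card_mul_of_blocks {ι β : Type*} [Fintype ι] [Fintype β]
    (A : Matrix (ι × β) (ι × β) ℝ)
    (hA : ∀ a i (v u : ι → ℝ), v ⬝ᵥ A.submatrix (·, a) (·, i) *ᵥ u ≤ √(v ⬝ᵥ v) * √(u ⬝ᵥ u))
    (v : ι × β → ℝ) : v ⬝ᵥ A *ᵥ v ≤ Fintype.card β * (v ⬝ᵥ v) := by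
  set w : β → ι → ℝ := fun a p => v (p, a)
  have hsplit : v ⬝ᵥ A *ᵥ v = ∑ a, ∑ i, w a ⬝ᵥ A.submatrix (·, a) (·, i) *ᵥ w i := by
    simp only [w, dotProduct, mulVec, Fintype.sum_prod_type_right, Finset.mul_sum, submatrix_apply]
    exact Finset.sum_congr rfl fun a _ => Finset.sum_comm
  have hnorm : v ⬝ᵥ v = ∑ a, w a ⬝ᵥ w a := by
    simp only [w, dotProduct, Fintype.sum_prod_type_right]
  calc v ⬝ᵥ A *ᵥ v ≤ ∑ a, ∑ i, √(w a ⬝ᵥ w a) * √(w i ⬝ᵥ w i) := by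
        rw [hsplit]; gcongr with a _ i _; exact hA a i _ _
    _ = (∑ a, √(w a ⬝ᵥ w a)) ^ 2 := by rw [sq, Finset.sum_mul_sum]
    _ ≤ Fintype.card β * ∑ a, √(w a ⬝ᵥ w a) ^ 2 := sq_sum_le_card_mul_sum_sq
    _ = Fintype.card β * (v ⬝ᵥ v) := by
      rw [hnorm]
      congr 1
      exact Finset.sum_congr rfl fun a _ =>
        Real.sq_sqrt (by simpa using dotProduct_self_star_nonneg (w a))

theorem Kgrad_submatrix {n d : ℕ} (x : Fin n → Fin d → ℝ) (a i : Fin n) :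
    (Kgrad x).submatrix (·, a) (·, i) =
      Real.exp (-((x a - x i) ⬝ᵥ (x a - x i)) / 2) • gradBlock (x a - x i) := by
  ext (_ | p) (_ | q) <;> simp [Kgrad, gradBlock, dotProduct, sq, mul_comm]

theorem dotProduct_Kgrad_submatrix_mulVec_le {n d : ℕ} (x : Fin n → Fin d → ℝ) (a i : Fin n)
    (v u : Option (Fin d) → ℝ) :
    v ⬝ᵥ (Kgrad x).submatrix (·, a) (·, i) *ᵥ u ≤ √(v ⬝ᵥ v) * √(u ⬝ᵥ u) := by
  rw [Kgrad_submatrix, smul_mulVec, dotProduct_smul, smul_eq_mul]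
  calc _ ≤ Real.exp (-((x a - x i) ⬝ᵥ (x a - x i)) / 2) *
        (Real.exp ((x a - x i) ⬝ᵥ (x a - x i) / 2) * (√(v ⬝ᵥ v) * √(u ⬝ᵥ u))) :=
        mul_le_mul_of_nonneg_left (dotProduct_gradBlock_mulVec_le _ _ _) (Real.exp_pos _).le
    _ = √(v ⬝ᵥ v) * √(u ⬝ᵥ u) := by
      rw [← mul_assoc, ← Real.exp_add, neg_div, neg_add_cancel, Real.exp_zero, one_mul]

theorem dotProduct_Kgrad_mulVec_le {n d : ℕ} (x : Fin n → Fin d → ℝ)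
    (v : Option (Fin d) × Fin n → ℝ) : v ⬝ᵥ Kgrad x *ᵥ v ≤ n * (v ⬝ᵥ v) := by
  simpa using dotProduct_mulVec_le_card_mul_of_blocks _ (dotProduct_Kgrad_submatrix_mulVec_le x) v

theorem Matrix.IsHermitian.eigenvalues_le_of_dotProduct_mulVec_le {m : Type*} [Fintype m]
    [DecidableEq m] {A : Matrix m m ℝ} (hA : A.IsHermitian) {c : ℝ}
    (h : ∀ v, v ⬝ᵥ A *ᵥ v ≤ c * (v ⬝ᵥ v)) (i : m) : hA.eigenvalues i ≤ c := by
  have hunit : ⇑(hA.eigenvectorBasis i) ⬝ᵥ ⇑(hA.eigenvectorBasis i) = 1 := by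
    have := real_inner_self_eq_norm_sq (hA.eigenvectorBasis i)
    rw [hA.eigenvectorBasis.orthonormal.1 i, one_pow] at this
    rwa [EuclideanSpace.inner_eq_star_dotProduct, star_trivial] at this
  simpa [hA.eigenvalues_eq i, hunit] using h (hA.eigenvectorBasis i)

theorem one_le_uG_factor {d : ℝ} (hd : 0 ≤ d) :
    1 ≤ (1 + √(1 + 4 * d)) / 2 * Real.exp (-(1 + 2 * d - √(1 + 4 * d)) / (4 * d)) := by
  rcases hd.eq_or_lt with rfl | hd
  · norm_num
  set s := √(1 + 4 * d)
  have hs : s ^ 2 = 1 + 4 * d := Real.sq_sqrt (by linarith)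
  have hs1 : 1 < s := by nlinarith [Real.sqrt_nonneg (1 + 4 * d)]
  have hexponent : -(1 + 2 * d - s) / (4 * d) = -(s - 1) / (2 * (s + 1)) := by
    rw [div_eq_div_iff (by positivity) (by positivity)]
    nlinarith
  calc (1 : ℝ) ≤ (1 + s) / 2 * (1 + -(s - 1) / (2 * (s + 1))) := by
        field_simp
        linarith
    _ ≤ (1 + s) / 2 * Real.exp (-(1 + 2 * d - s) / (4 * d)) := by
        rw [hexponent, add_comm (1 : ℝ) (-(s - 1) / _)]
        gcongr
        exact Real.add_one_le_exp _

theorem natCast_le_one_add_uG {n : ℕ} (hn : 1 ≤ n) (d : ℕ) : (n : ℝ) ≤ 1 + uG n d := by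
  have hfactor := one_le_uG_factor (Nat.cast_nonneg (α := ℝ) d)
  have hn' : (1 : ℝ) ≤ n := by exact_mod_cast hn
  rw [uG, mul_assoc]
  nlinarith

theorem stmt_18_general {n d : ℕ} (hn : 1 ≤ n)
    (x : Fin n → Fin d → ℝ) (hpsd : (Kgrad x).PosSemidef)
    (κmax : ℝ) (hκ : 1 < κmax) (η : ℝ) (hη : η = (1 + uG n d) / (κmax - 1)) :
    ((⨆ i, hpsd.1.eigenvalues i) + η) / ((⨅ i, hpsd.1.eigenvalues i) + η) ≤ κmax := by
  have : Nonempty (Option (Fin d) × Fin n) := ⟨(none, ⟨0, hn⟩)⟩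
  have hmax : (⨆ i, hpsd.1.eigenvalues i) ≤ n :=
    ciSup_le (hpsd.1.eigenvalues_le_of_dotProduct_mulVec_le (dotProduct_Kgrad_mulVec_le x))
  have hmin : 0 ≤ ⨅ i, hpsd.1.eigenvalues i := le_ciInf hpsd.eigenvalues_nonneg
  have hnη : (n : ℝ) ≤ (κmax - 1) * η := by
    rw [hη, mul_div_cancel₀ _ (by linarith)]
    exact natCast_le_one_add_uG hn d
  have hη₀ : 0 < η := by
    have : (1 : ℝ) ≤ n := by exact_mod_cast hn
    nlinarith
  rw [div_le_iff₀ (by linarith)]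
  nlinarith

/-- If `K̃∇` is positive semidefinite, `κmax > 1` and
`η = (1 + u_G(n,d))/(κmax − 1)`, then `(λmax + η)/(λmin + η) ≤ κmax`, i.e. the
condition number of `K̃∇ + ηI` is at most `κmax`. -/
theorem stmt_18 {n d : ℕ} (hn : 1 ≤ n) (hd : 1 ≤ d)
    (x : Fin n → Fin d → ℝ) (hpsd : (Kgrad x).PosSemidef)
    (κmax : ℝ) (hκ : 1 < κmax) (η : ℝ) (hη : η = (1 + uG n d) / (κmax - 1)) :
    ((⨆ i, hpsd.1.eigenvalues i) + η) / ((⨅ i, hpsd.1.eigenvalues i) + η) ≤ κmax :=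
  stmt_18_general hn x hpsd κmax hκ η hη
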